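/- With R^fl as in the context, let S := O[y₁₁, y₂₂, …, y_{2m,2m}] be the polynomial ring in the diagonal variables and consider the natural O-algebra homomorphism S → R^fl sending each y_{ii} to its class. Then this homomorphism is injective, R^fl is a finitely generated S-module, and R^fl is flat as an S-module. -/

import Mathlib

open MvPolynomial

namespace Stmt12

/-! ## The ring `R^fl`

`O` is a complete discrete valuation ring whose fraction field has characteristic `0` and whose
residue field has characteristic `2`; `c ∈ O` is a unit and `b ∈ O` a uniformizer.
`P := O[y_{ij} (1 ≤ i,j ≤ 2m), x₁,…,x_{2m}]`, `α := Σ_{i=1}^m y_{i,2m+1−i}`, and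
`I^fl ⊆ P` is the ideal generated by: all `2 × 2` minors of the `(2m+1) × 2m` matrix obtained by
stacking `Y` on top of the row `x`; all entries of `Y − Yᵀ`; and all entries of the matrix
`(c·α + b)·Y + xᵗ·x`.  Finally `R^fl := P ⧸ I^fl`. -/

variable (O : Type*) [CommRing O] (m : ℕ) (c b : O)

/-- The polynomial ring `P = O[y_{ij} (1 ≤ i,j ≤ 2m), x₁, …, x_{2m}]`. -/
abbrev P := MvPolynomial ((Fin (2 * m) × Fin (2 * m)) ⊕ Fin (2 * m)) O

/-- The matrix of variables `Y = (y_{ij})`. -/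
noncomputable def Y : Matrix (Fin (2 * m)) (Fin (2 * m)) (P O m) :=
  Matrix.of fun i j => X (Sum.inl (i, j))

/-- The row of variables `x = (x₁, …, x_{2m})`. -/
noncomputable def x : Fin (2 * m) → P O m := fun i => X (Sum.inr i)

/-- The `(2m+1) × 2m` matrix obtained by stacking `Y` on top of the row `x`. -/
noncomputable def stacked : Matrix (Fin (2 * m + 1)) (Fin (2 * m)) (P O m) :=
  Matrix.of fun i j =>
    if h : (i : ℕ) < 2 * m then Y O m ⟨(i : ℕ), h⟩ j else x O m j

/-- `α = Σ_{i=1}^m y_{i, 2m+1−i}` (in zero-based indexing: `Σ_{i=0}^{m−1} y_{i, 2m−1−i}`). -/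
noncomputable def alpha : P O m :=
  ∑ i : Fin m, Y O m (Fin.castLE (by omega) i) (Fin.rev (Fin.castLE (by omega) i))

/-- The ideal `I^fl`, generated by: all `2 × 2` minors of the stacked matrix; all entries of
`Y − Yᵀ`; and all entries of the matrix `(c·α + b)·Y + xᵗ·x`. -/
noncomputable def Ifl : Ideal (P O m) :=
  Ideal.span
    ({r | ∃ (a a' : Fin (2 * m + 1)) (p q : Fin (2 * m)),
        r = stacked O m a p * stacked O m a' q - stacked O m a q * stacked O m a' p} ∪
      {r | ∃ i j : Fin (2 * m), r = Y O m i j - Y O m j i} ∪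
      {r | ∃ i j : Fin (2 * m),
        r = (C c * alpha O m + C b) * Y O m i j + x O m i * x O m j})

/-- The ring `R^fl = P ⧸ I^fl`. -/
abbrev Rfl := P O m ⧸ Ifl O m c b

/-- The class in `R^fl` of the variable `y_{ij}`. -/
noncomputable def yc (i j : Fin (2 * m)) : Rfl O m c b :=
  Ideal.Quotient.mk (Ifl O m c b) (X (Sum.inl (i, j)))

/-- The class in `R^fl` of the variable `x_i`. -/
noncomputable def xc (i : Fin (2 * m)) : Rfl O m c b :=
  Ideal.Quotient.mk (Ifl O m c b) (X (Sum.inr i))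

end Stmt12

/-!
Sending `y_{ij} ↦ v_i v_j` and `x_i ↦ T v_i` defines a ring map from `R^fl` to
`R' = O[v₁, …, v_{2m}][T] / (T² + c q + b)`, `q = Σ_{i ≤ m} v_i v_{2m+1-i}`, under which `S`
acts through `y_{ii} ↦ v_i²`.

In `R^fl` the vanishing of the `2 × 2` minors and the symmetry of `Y` make a product of `y`'s
and at most one `x` depend only on the multiset of its indices. A repeated index splits off a
diagonal `y_{ii} ∈ S`, and two `x`'s are traded for `y`'s through
`x_i x_j = -(cα + b) y_{ij}`. So the words `w_E` attached to the subsets `E ⊆ {1, …, 2m}` span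
`R^fl` over `S`, and `w_∅ = 1`. Their images `v^E T^{|E| mod 2}` are independent over
`O[v₁², …, v_{2m}²]`: `R'` is free on `1, T` over `O[v]`, and the squarefree monomials are free
over the subring of squares. Hence `R^fl` is a free `S`-module containing `S` as the span of
`w_∅`.
-/

section PairWord

variable {ι A : Type*} [CommMonoid A]

structure IsSymmMinorsVanish (y : ι → ι → A) (x : ι → A) : Prop where
  symm : ∀ i j, y i j = y j i
  minor_yy : ∀ a a' p q, y a p * y a' q = y a q * y a' p
  minor_yx : ∀ a p q, y a p * x q = y a q * x p

variable (y : ι → ι → A) (x : ι → A)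

def pairWord : List ι → A
  | [] => 1
  | [a] => x a
  | a :: a' :: l => y a a' * pairWord l

@[simp] lemma pairWord_nil : pairWord y x [] = 1 := rfl

@[simp] lemma pairWord_singleton (a : ι) : pairWord y x [a] = x a := rfl

@[simp] lemma pairWord_cons_cons (a a' : ι) (l : List ι) :
    pairWord y x (a :: a' :: l) = y a a' * pairWord y x l := rfl

lemma pairWord_append : ∀ {l₁ : List ι} (l₂ : List ι), Even l₁.length →
    pairWord y x (l₁ ++ l₂) = pairWord y x l₁ * pairWord y x l₂
  | [], _, _ => by simp
  | [_], _, h => by simp at h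
  | _ :: _ :: l₁, l₂, h => by
    rw [List.cons_append, List.cons_append, pairWord_cons_cons, pairWord_cons_cons,
      pairWord_append l₂ (by simpa [Nat.even_add_one] using h), mul_assoc]

variable {y x}

lemma IsSymmMinorsVanish.pairWord_append_swap (h : IsSymmMinorsVanish y x) :
    ∀ (p : List ι) (i j : ι) (s : List ι),
      pairWord y x (p ++ i :: j :: s) = pairWord y x (p ++ j :: i :: s)
  | [], i, j, s => by simp [h.symm i j]
  | [a], i, j, [] => by simp [h.minor_yx]
  | [a], i, j, d :: s => by
    have hyy : y a i * y j d = y a j * y i d := by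
      rw [h.minor_yy, h.symm j i, ← h.minor_yy, h.symm i d]
    simp only [List.singleton_append, pairWord_cons_cons, ← mul_assoc, hyy]
  | a :: a' :: p, i, j, s => by
    simp only [List.cons_append, pairWord_cons_cons, h.pairWord_append_swap p i j s]

lemma IsSymmMinorsVanish.pairWord_perm (h : IsSymmMinorsVanish y x) {l₁ l₂ : List ι}
    (hl : l₁.Perm l₂) : pairWord y x l₁ = pairWord y x l₂ := by
  suffices ∀ p, pairWord y x (p ++ l₁) = pairWord y x (p ++ l₂) by simpa using this []
  induction hl with
  | nil => exact fun _ => rfl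
  | cons a _ ih => exact fun p => by simpa using ih (p ++ [a])
  | swap a a' l => exact fun p => h.pairWord_append_swap p a' a l
  | trans _ _ ih₁ ih₂ => exact fun p => (ih₁ p).trans (ih₂ p)

end PairWord

theorem AdjoinRoot.of_add_of_mul_root_eq_zero_iff {R : Type*} [CommRing R] {d a a' : R} :
    of (Polynomial.X ^ 2 + Polynomial.C d) a +
        of (Polynomial.X ^ 2 + Polynomial.C d) a' * root (Polynomial.X ^ 2 + Polynomial.C d) = 0 ↔
      a = 0 ∧ a' = 0 := by
  refine ⟨fun h => ?_, by rintro ⟨rfl, rfl⟩; simp⟩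
  nontriviality R
  set g : Polynomial R := Polynomial.X ^ 2 + Polynomial.C d
  have hg : g.Monic := Polynomial.monic_X_pow_add_C _ two_ne_zero
  have hmk : mk g (Polynomial.C a' * Polynomial.X + Polynomial.C a) = 0 := by
    rw [map_add, map_mul, mk_C, mk_C, mk_X, add_comm]; exact h
  have hlt : (Polynomial.C a' * Polynomial.X + Polynomial.C a).degree < g.degree := by
    refine Polynomial.degree_linear_le.trans_lt ?_
    rw [Polynomial.degree_X_pow_add_C two_pos]
    exact_mod_cast one_lt_two
  have hmod := congrArg (modByMonicHom hg) hmk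
  rw [modByMonicHom_mk, (Polynomial.modByMonic_eq_self_iff hg).2 hlt, map_zero] at hmod
  exact ⟨by simpa using congrArg (Polynomial.coeff · 0) hmod,
    by simpa using congrArg (Polynomial.coeff · 1) hmod⟩

theorem MvPolynomial.eq_zero_of_sum_expand_mul_prod_X_eq_zero {R σ : Type*} [CommSemiring R]
    {p : ℕ} (hp : 2 ≤ p) {T : Finset (Finset σ)} {g : Finset σ → MvPolynomial σ R}
    (h : ∑ E ∈ T, expand p (g E) * ∏ i ∈ E, X i = 0) {E₀ : Finset σ} (hE₀ : E₀ ∈ T) :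
    g E₀ = 0 := by
  classical
  set ind : Finset σ → σ →₀ ℕ := fun E => ∑ i ∈ E, Finsupp.single i 1 with hind_def
  have hind : ∀ E j, ind E j = if j ∈ E then 1 else 0 := by
    intro E j
    simp [ind, Finsupp.finsetSum_apply, Finsupp.single_apply]
  have hprod : ∀ E : Finset σ, ∏ i ∈ E, (X i : MvPolynomial σ R) = monomial (ind E) 1 := by
    intro E; rw [hind_def, monomial_sum_one]; rfl
  have hp1 : ¬ p ∣ 1 := fun h => by have := Nat.le_of_dvd one_pos h; omega
  ext u
  have hc := congrArg (coeff (p • u + ind E₀)) h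
  rw [coeff_sum, coeff_zero, Finset.sum_eq_single E₀, hprod, coeff_mul_monomial,
    coeff_expand_smul _ (by omega), mul_one] at hc
  · exact hc
  · intro E _ hne
    rw [hprod, coeff_mul_monomial']
    split_ifs with hle
    · obtain ⟨i, hi⟩ : ∃ i, ¬ (i ∈ E ↔ i ∈ E₀) := by
        by_contra! hall
        exact hne (Finset.ext hall)
      have hlei := hle i
      rw [coeff_expand_of_not_dvd (i := i), zero_mul]
      simp only [Finsupp.coe_tsub, Finsupp.coe_add, Finsupp.coe_smul, Pi.sub_apply, Pi.add_apply,
        Pi.smul_apply, smul_eq_mul, hind] at hlei ⊢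
      by_cases h₁ : i ∈ E
      · have h₂ : i ∉ E₀ := fun h₂ => hi (iff_of_true h₁ h₂)
        simp only [h₁, h₂, if_true, if_false, add_zero] at hlei ⊢
        exact fun hd => hp1 (Nat.sub_sub_self hlei ▸ Nat.dvd_sub (dvd_mul_right p (u i)) hd)
      · have h₂ : i ∈ E₀ := by tauto
        simp only [h₁, h₂, if_true, if_false, tsub_zero]
        exact (Nat.dvd_add_right (dvd_mul_right p (u i))).not.2 hp1
    · rfl
  · exact fun h => absurd hE₀ h

namespace Stmt12

variable (O : Type*) [CommRing O] (m : ℕ) (c b : O)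

local notation "S" => MvPolynomial (Fin (2 * m)) O

lemma stacked_castSucc (a p : Fin (2 * m)) : stacked O m a.castSucc p = Y O m a p := by
  simp [stacked]

lemma stacked_last (p : Fin (2 * m)) : stacked O m (Fin.last _) p = x O m p := by
  simp [stacked]

lemma mk_Y (i j : Fin (2 * m)) :
    Ideal.Quotient.mk (Ifl O m c b) (Y O m i j) = yc O m c b i j :=
  rfl

lemma mk_x (i : Fin (2 * m)) : Ideal.Quotient.mk (Ifl O m c b) (x O m i) = xc O m c b i :=
  rfl

theorem isSymmMinorsVanish : IsSymmMinorsVanish (yc O m c b) (xc O m c b) := by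
  refine ⟨fun i j => ?_, fun a a' p q => ?_, fun a p q => ?_⟩ <;>
    simp only [yc, xc, ← map_mul, Ideal.Quotient.eq]
  · exact Ideal.subset_span (Or.inl (Or.inr ⟨i, j, rfl⟩))
  · refine Ideal.subset_span (Or.inl (Or.inl ⟨a.castSucc, a'.castSucc, p, q, ?_⟩))
    simp only [stacked_castSucc, Y, Matrix.of_apply]
  · refine Ideal.subset_span (Or.inl (Or.inl ⟨a.castSucc, Fin.last _, p, q, ?_⟩))
    simp only [stacked_castSucc, stacked_last, Y, x, Matrix.of_apply]

theorem xc_mul_xc (i j : Fin (2 * m)) :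
    xc O m c b i * xc O m c b j =
      -(algebraMap O _ c * (∑ k : Fin m,
          yc O m c b (Fin.castLE (by omega) k) (Fin.rev (Fin.castLE (by omega) k))) *
          yc O m c b i j + algebraMap O _ b * yc O m c b i j) := by
  have h : Ideal.Quotient.mk (Ifl O m c b)
      ((C c * alpha O m + C b) * Y O m i j + x O m i * x O m j) = 0 :=
    Ideal.Quotient.eq_zero_iff_mem.2 (Ideal.subset_span (Or.inr ⟨i, j, rfl⟩))
  have hC : ∀ a : O, Ideal.Quotient.mk (Ifl O m c b) (C a) = algebraMap O _ a := fun _ => rfl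
  simp only [map_add, map_mul, map_sum, hC, alpha, mk_Y, mk_x] at h
  linear_combination h

noncomputable def diag : S →ₐ[O] Rfl O m c b :=
  aeval fun i => yc O m c b i i

noncomputable abbrev diagAlgebra : Algebra S (Rfl O m c b) :=
  (diag O m c b).toRingHom.toAlgebra

attribute [local instance] diagAlgebra

-- Without this shortcut, instance search for `Module S (Rfl O m c b)` times out.
noncomputable abbrev diagModule : Module S (Rfl O m c b) :=
  Algebra.toModule

attribute [local instance] diagModule

lemma diag_X (i : Fin (2 * m)) : diag O m c b (X i) = yc O m c b i i :=
  aeval_X _ i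

lemma diag_smul (s : S) (z : Rfl O m c b) : s • z = diag O m c b s * z :=
  rfl

noncomputable def word (E : Finset (Fin (2 * m))) : Rfl O m c b :=
  pairWord (yc O m c b) (xc O m c b) (E.sort (· ≤ ·))

lemma word_empty : word O m c b ∅ = 1 := by
  rw [word, Finset.sort_empty (· ≤ ·), pairWord_nil]

theorem pairWord_mem_span (l : List (Fin (2 * m))) :
    pairWord (yc O m c b) (xc O m c b) l ∈ Submodule.span S (Set.range (word O m c b)) := by
  induction hn : l.length using Nat.strong_induction_on generalizing l with
  | _ n ih =>
  by_cases hnd : l.Nodup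
  · rw [(isSymmMinorsVanish O m c b).pairWord_perm
      ((Finset.sort_perm_toList _ (· ≤ ·)).trans (List.toFinset_toList hnd)).symm]
    exact Submodule.subset_span ⟨l.toFinset, rfl⟩
  · obtain ⟨a, ha⟩ := List.exists_duplicate_iff_not_nodup.2 hnd
    obtain ⟨l', hperm⟩ := (List.duplicate_iff_sublist.1 ha).exists_perm_append
    rw [(isSymmMinorsVanish O m c b).pairWord_perm hperm, List.cons_append, List.cons_append,
      List.nil_append, pairWord_cons_cons, ← diag_X, ← diag_smul]
    refine Submodule.smul_mem _ _ (ih l'.length ?_ l' rfl)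
    simp only [← hn, hperm.length_eq, List.length_append, List.length_cons, List.length_nil]
    omega

theorem xc_mul_pairWord_mem_span (i : Fin (2 * m)) (l : List (Fin (2 * m))) :
    xc O m c b i * pairWord (yc O m c b) (xc O m c b) l ∈
      Submodule.span S (Set.range (word O m c b)) := by
  rcases Nat.even_or_odd l.length with hl | hl
  · rw [mul_comm (xc O m c b i), ← pairWord_singleton (yc O m c b) (xc O m c b) i,
      ← pairWord_append _ _ _ hl]
    exact pairWord_mem_span O m c b _
  obtain ⟨l', p, rfl⟩ : ∃ l' p, l = l' ++ [p] :=
    ⟨_, _, (List.dropLast_append_getLast (List.ne_nil_of_length_pos hl.pos)).symm⟩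
  have hl' : Even l'.length := by simpa [Nat.odd_add_one] using hl
  have key : xc O m c b i * pairWord (yc O m c b) (xc O m c b) (l' ++ [p]) =
      -((C c : S) • ∑ k : Fin m, pairWord (yc O m c b) (xc O m c b)
          (Fin.castLE (by omega) k :: Fin.rev (Fin.castLE (by omega) k) :: i :: p :: l') +
        (C b : S) • pairWord (yc O m c b) (xc O m c b) (i :: p :: l')) := by
    simp only [pairWord_append _ _ _ hl', pairWord_singleton, diag_smul, pairWord_cons_cons,
      diag, aeval_C, ← Finset.sum_mul]
    linear_combination pairWord (yc O m c b) (xc O m c b) l' * xc_mul_xc O m c b i p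
  rw [key]
  exact neg_mem (add_mem
    (Submodule.smul_mem _ _ (sum_mem fun k _ => pairWord_mem_span O m c b _))
    (Submodule.smul_mem _ _ (pairWord_mem_span O m c b _)))

theorem span_word_eq_top : Submodule.span S (Set.range (word O m c b)) = ⊤ := by
  set M := Submodule.span S (Set.range (word O m c b))
  have hgen : ∀ s, ∀ z ∈ M, Ideal.Quotient.mk (Ifl O m c b) (X s) * z ∈ M := by
    intro s z hz
    induction hz using Submodule.span_induction with
    | mem _ h =>
      obtain ⟨E, rfl⟩ := h
      rcases s with ⟨i, j⟩ | i
      · exact pairWord_mem_span O m c b (i :: j :: _)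
      · exact xc_mul_pairWord_mem_span O m c b i _
    | zero => simp
    | add _ _ _ _ h₁ h₂ => rw [mul_add]; exact add_mem h₁ h₂
    | smul a _ _ h => rw [mul_smul_comm]; exact M.smul_mem a h
  rw [eq_top_iff]
  rintro z -
  obtain ⟨f, rfl⟩ := Ideal.Quotient.mk_surjective z
  induction f using MvPolynomial.induction_on with
  | C a =>
    have : Ideal.Quotient.mk (Ifl O m c b) (C a) = (C a : S) • word O m c b ∅ := by
      rw [diag_smul, word_empty, mul_one, diag, aeval_C]
      rfl
    rw [this]
    exact M.smul_mem _ (Submodule.subset_span ⟨∅, rfl⟩)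
  | add f g hf hg => rw [map_add]; exact add_mem hf hg
  | mul_X f s hf => rw [map_mul, mul_comm (Ideal.Quotient.mk _ f)]; exact hgen s _ hf

noncomputable def alphaPoly : S :=
  ∑ k : Fin m, X (Fin.castLE (by omega) k) * X (Fin.rev (Fin.castLE (by omega) k))

noncomputable def rootPoly : Polynomial S :=
  Polynomial.X ^ 2 + Polynomial.C (C c * alphaPoly O m + C b)

lemma root_rootPoly_sq :
    AdjoinRoot.root (rootPoly O m c b) ^ 2 =
      -AdjoinRoot.of (rootPoly O m c b) (C c * alphaPoly O m + C b) := by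
  rw [eq_neg_iff_add_eq_zero, ← AdjoinRoot.mk_X, ← AdjoinRoot.mk_C, ← map_pow, ← map_add]
  exact AdjoinRoot.mk_self

noncomputable def rootParam : P O m →ₐ[O] AdjoinRoot (rootPoly O m c b) :=
  aeval (Sum.elim (fun ij => AdjoinRoot.of _ (X ij.1 * X ij.2))
    fun i => AdjoinRoot.root _ * AdjoinRoot.of _ (X i))

theorem Ifl_le_ker_rootParam : Ifl O m c b ≤ RingHom.ker (rootParam O m c b) := by
  rw [Ifl, Ideal.span_le]
  rintro r ((⟨a, a', p, q, rfl⟩ | ⟨i, j, rfl⟩) | ⟨i, j, rfl⟩) <;>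
    simp only [SetLike.mem_coe, RingHom.mem_ker]
  · simp only [stacked, Matrix.of_apply]
    split_ifs <;>
      simp only [rootParam, map_mul, map_sub, Y, x, Matrix.of_apply, aeval_X, Sum.elim_inl,
        Sum.elim_inr] <;>
      ring
  · simp only [rootParam, map_sub, map_mul, Y, Matrix.of_apply, aeval_X, Sum.elim_inl]
    ring
  · have hC : ∀ a : O, algebraMap O (AdjoinRoot (rootPoly O m c b)) a =
        AdjoinRoot.of _ (C a) := fun _ => rfl
    simp only [rootParam, Y, x, alpha, Matrix.of_apply, map_add, map_mul, map_sum, aeval_X,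
      aeval_C, hC, Sum.elim_inl, Sum.elim_inr]
    have hsq := root_rootPoly_sq O m c b
    simp only [alphaPoly, map_add, map_mul, map_sum] at hsq
    linear_combination AdjoinRoot.of _ (X i) * AdjoinRoot.of _ (X j) * hsq

noncomputable def toRoot : Rfl O m c b →ₐ[O] AdjoinRoot (rootPoly O m c b) :=
  Ideal.Quotient.liftₐ _ (rootParam O m c b) fun _ h => Ifl_le_ker_rootParam O m c b h

lemma toRoot_mk (p : P O m) :
    toRoot O m c b (Ideal.Quotient.mk _ p) = rootParam O m c b p :=
  rfl

@[simp] lemma toRoot_yc (i j : Fin (2 * m)) :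
    toRoot O m c b (yc O m c b i j) = AdjoinRoot.of _ (X i * X j) := by
  rw [yc, toRoot_mk, rootParam, aeval_X, Sum.elim_inl, map_mul]

@[simp] lemma toRoot_xc (i : Fin (2 * m)) :
    toRoot O m c b (xc O m c b i) = AdjoinRoot.root _ * AdjoinRoot.of _ (X i) := by
  rw [xc, toRoot_mk, rootParam, aeval_X, Sum.elim_inr]

lemma toRoot_diag (s : S) : toRoot O m c b (diag O m c b s) = AdjoinRoot.of _ (expand 2 s) := by
  induction s using MvPolynomial.induction_on with
  | C a => rw [diag, aeval_C, expand_C, AlgHom.commutes]; rfl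
  | add p q hp hq => simp only [map_add, hp, hq]
  | mul_X p i hp => simp [hp, diag_X, pow_two]

lemma toRoot_pairWord : ∀ l : List (Fin (2 * m)),
    toRoot O m c b (pairWord (yc O m c b) (xc O m c b) l) =
      AdjoinRoot.of _ (l.map X).prod * AdjoinRoot.root _ ^ (l.length % 2)
  | [] => by simp
  | [a] => by simp [mul_comm]
  | a :: a' :: l => by
    simp only [pairWord_cons_cons, map_mul, toRoot_yc, toRoot_pairWord l, List.map_cons,
      List.prod_cons, List.length_cons, show (l.length + 1 + 1) % 2 = l.length % 2 by omega]
    ring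

lemma toRoot_word (E : Finset (Fin (2 * m))) :
    toRoot O m c b (word O m c b E) =
      AdjoinRoot.of _ (∏ i ∈ E, X i) * AdjoinRoot.root _ ^ (E.card % 2) := by
  rw [word, toRoot_pairWord, Finset.length_sort,
    ((Finset.sort_perm_toList _ (· ≤ ·)).map X).prod_eq, Finset.prod_map_toList]

theorem linearIndependent_word : LinearIndependent S (word O m c b) := by
  classical
  rw [Fintype.linearIndependent_iff]
  intro g hg E
  set a : Finset (Fin (2 * m)) → S := fun E => expand 2 (g E) * ∏ i ∈ E, X i
  have hsplit : toRoot O m c b (∑ E, g E • word O m c b E) =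
      AdjoinRoot.of _ (∑ E ∈ Finset.univ.filter (fun E => E.card % 2 = 0), a E) +
      AdjoinRoot.of _ (∑ E ∈ Finset.univ.filter (fun E => E.card % 2 = 1), a E) *
        AdjoinRoot.root _ := by
    simp only [map_sum, diag_smul, map_mul, toRoot_diag, toRoot_word, Finset.sum_filter,
      Finset.sum_mul, ← Finset.sum_add_distrib]
    refine Finset.sum_congr rfl fun E _ => ?_
    rcases Nat.mod_two_eq_zero_or_one E.card with h | h <;> simp [h, a, mul_assoc]
  rw [hg, map_zero, eq_comm] at hsplit
  obtain ⟨h₀, h₁⟩ := AdjoinRoot.of_add_of_mul_root_eq_zero_iff.1 hsplit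
  rcases Nat.mod_two_eq_zero_or_one E.card with h | h
  · exact MvPolynomial.eq_zero_of_sum_expand_mul_prod_X_eq_zero le_rfl h₀ (by simp [h])
  · exact MvPolynomial.eq_zero_of_sum_expand_mul_prod_X_eq_zero le_rfl h₁ (by simp [h])

noncomputable def wordBasis : Module.Basis (Finset (Fin (2 * m))) S (Rfl O m c b) :=
  .mk (linearIndependent_word O m c b) (span_word_eq_top O m c b).ge

theorem diag_finite : (diag O m c b).toRingHom.Finite :=
  .of_basis (wordBasis O m c b)

theorem diag_flat : (diag O m c b).toRingHom.Flat :=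
  have := Module.Free.of_basis (wordBasis O m c b)
  .of_free

theorem diag_injective : Function.Injective (diag O m c b) := by
  intro s t hst
  apply (linearIndependent_word O m c b).smul_left_injective ∅
  simp only [diag_smul, word_empty, mul_one, hst]

end Stmt12

theorem stmt_12_general (O : Type*) [CommRing O]
    (m : ℕ) (c : O) (b : O)
    (ψ : MvPolynomial (Fin (2 * m)) O →ₐ[O] Stmt12.Rfl O m c b)
    (hψ : ψ = MvPolynomial.aeval (fun i : Fin (2 * m) => Stmt12.yc O m c b i i)) :
    Function.Injective ψ ∧ ψ.toRingHom.Finite ∧ ψ.toRingHom.Flat := by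
  subst hψ
  exact ⟨Stmt12.diag_injective O m c b, Stmt12.diag_finite O m c b, Stmt12.diag_flat O m c b⟩

/-- **finiteness and flatness over the diagonal polynomial subring.**  Let `O`
be a complete discrete valuation ring whose fraction field has characteristic `0` and whose
residue field has characteristic `2`, let `c ∈ O` be a unit and `b ∈ O` a uniformizer (`m ≥ 1`),
and let `R^fl` be the ring described above.  Let `S := O[y₁₁, …, y_{2m,2m}]` be the polynomial
ring in the diagonal variables and `ψ : S → R^fl` the natural `O`-algebra homomorphism sending
each `y_{ii}` to its class.  Then `ψ` is injective, `R^fl` is a finitely generated `S`-module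
(via `ψ`), and `R^fl` is flat as an `S`-module (via `ψ`). -/
theorem stmt_12 (O : Type*) [CommRing O] [IsDomain O] [IsDiscreteValuationRing O] [CharZero O]
    [IsAdicComplete (IsLocalRing.maximalIdeal O) O]
    [CharP (IsLocalRing.ResidueField O) 2]
    (m : ℕ) (hm : 1 ≤ m) (c : O) (hc : IsUnit c) (b : O) (hb : Irreducible b)
    (ψ : MvPolynomial (Fin (2 * m)) O →ₐ[O] Stmt12.Rfl O m c b)
    (hψ : ψ = MvPolynomial.aeval (fun i : Fin (2 * m) => Stmt12.yc O m c b i i)) :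
    Function.Injective ψ ∧ ψ.toRingHom.Finite ∧ ψ.toRingHom.Flat :=
  stmt_12_general O m c b ψ hψ
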